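/- Let D be a triangulated category and A ⊆ D a right admissible full triangulated subcategory. Then every object X of D fits into a distinguished triangle Y → X → Z → Y[1] with Y ∈ A and Z ∈ A^⊥, where A^⊥ = { B ∈ D : Hom_D(A', B[i]) = 0 for all A' ∈ A and all i }. -/

import Mathlib

/-!
STATEMENT 3: Let `D` be a triangulated category and `A ⊆ D` a right admissible full
triangulated subcategory (the inclusion `A ↪ D` has a right adjoint).  Then every object
`X` of `D` fits into a distinguished triangle `Y ⟶ X ⟶ Z ⟶ Y[1]` with `Y ∈ A` and
`Z ∈ A^⊥`, where `A^⊥ = {B : Hom(A', B[i]) = 0 for all A' ∈ A and all i}`.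
-/

open CategoryTheory CategoryTheory.Limits CategoryTheory.Pretriangulated

namespace CategoryTheory.Triangulated

/-- The structure `Triangulated.Subcategory` of Mathlib (December 2024), removed since. -/
structure Subcategory (C : Type*) [Category C] [HasZeroObject C] [HasShift C ℤ]
    [Preadditive C] [∀ n : ℤ, (shiftFunctor C n).Additive] [Pretriangulated C] where
  P : C → Prop
  zero' : ∃ (Z : C) (_ : IsZero Z), P Z
  shift (X : C) (n : ℤ) : P X → P (X⟦n⟧)
  ext₂' (T : Triangle C) (_ : T ∈ distTriang C) : P T.obj₁ → P T.obj₃ →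
    ObjectProperty.isoClosure P T.obj₂

end CategoryTheory.Triangulated
/-! The counit `ε : ι (R X) ⟶ X` of the adjunction induces bijections
`Hom(B, ι R X) ≃ Hom(B, X)` for `B ∈ A`. Completing `ε` to a distinguished triangle, exactness
of `Hom(B, -)` along it (using the bijection also for `B⟦-1⟧ ∈ A`) kills `Hom(B, cone ε)`;
the right orthogonal of a shift-stable property is shift-stable, which gives the vanishing
for all shifts. -/

namespace CategoryTheory

section Adjunction

variable {C D : Type*} [Category C] [Category D] {L : C ⥤ D} {R : D ⥤ C}

lemma Adjunction.bijective_comp_counit_app (adj : L ⊣ R) [L.Full] [L.Faithful] (c : C) (X : D) :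
    Function.Bijective (fun w : L.obj c ⟶ L.obj (R.obj X) ↦ w ≫ adj.counit.app X) := by
  have hcomp : (fun w : L.obj c ⟶ L.obj (R.obj X) ↦ w ≫ adj.counit.app X) =
      (adj.homEquiv c X).symm ∘ (Functor.FullyFaithful.ofFullyFaithful L).homEquiv.symm := by
    ext w
    simp [Adjunction.homEquiv_counit]
  rw [hcomp]
  exact (adj.homEquiv c X).symm.bijective.comp
    (Functor.FullyFaithful.ofFullyFaithful L).homEquiv.symm.bijective

lemma Adjunction.injective_comp_map_of_injective_comp (adj : L ⊣ R) {B : C} {Y X : D}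
    (f : Y ⟶ X) (hf : Function.Injective (fun v : L.obj B ⟶ Y ↦ v ≫ f)) :
    Function.Injective (fun u : B ⟶ R.obj Y ↦ u ≫ R.map f) := by
  intro u₁ u₂ hu
  apply (adj.homEquiv B Y).symm.injective
  apply hf
  simpa only [← Adjunction.homEquiv_naturality_right_symm] using
    congrArg (adj.homEquiv B X).symm hu

end Adjunction

section

variable {C : Type*} [Category C] [HasZeroObject C] [HasShift C ℤ] [Preadditive C]
  [∀ n : ℤ, (shiftFunctor C n).Additive] [Pretriangulated C]

namespace Pretriangulated

lemma rightOrthogonal_obj₃_of_bijective_comp_mor₁ (P : ObjectProperty C)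
    [P.IsStableUnderShiftBy (-1 : ℤ)] (T : Triangle C) (hT : T ∈ distTriang C)
    (hbij : ∀ B, P B → Function.Bijective (fun w : B ⟶ T.obj₁ ↦ w ≫ T.mor₁)) :
    P.rightOrthogonal T.obj₃ := by
  intro B φ hB
  have hinj :
      Function.Injective (fun u : B ⟶ T.obj₁⟦(1 : ℤ)⟧ ↦ u ≫ T.mor₁⟦(1 : ℤ)⟧') :=
    (shiftEquiv C (1 : ℤ)).symm.toAdjunction.injective_comp_map_of_injective_comp T.mor₁
      (hbij _ (P.le_shift (-1 : ℤ) B hB)).injective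
  have hφ₃ : φ ≫ T.mor₃ = 0 :=
    hinj (by
      simp only [Category.assoc, comp_distTriang_mor_zero₃₁ T hT, comp_zero, zero_comp])
  obtain ⟨u, rfl⟩ := Triangle.coyoneda_exact₃ T hT φ hφ₃
  obtain ⟨w, rfl⟩ := (hbij B hB).surjective u
  simp only [Category.assoc, comp_distTriang_mor_zero₁₂ T hT, comp_zero]

end Pretriangulated

instance Triangulated.Subcategory.isStableUnderShift (A : Triangulated.Subcategory C) :
    ObjectProperty.IsStableUnderShift A.P ℤ where
  isStableUnderShiftBy n := ⟨fun X hX ↦ A.shift X n hX⟩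

end

end CategoryTheory

theorem right_admissible_semiorthogonal_decomposition
    (D : Type*) [Category D] [HasZeroObject D] [Preadditive D]
    [HasShift D ℤ] [∀ i : ℤ, (shiftFunctor D i).Additive] [Pretriangulated D]
    -- A is a full triangulated subcategory of D
    (A : Triangulated.Subcategory D)
    -- A is right admissible: the inclusion has a right adjoint
    (hadm : (ObjectProperty.ι A.P).IsLeftAdjoint) :
    ∀ X : D, ∃ (Y Z : D) (f : Y ⟶ X) (g : X ⟶ Z) (h : Z ⟶ Y⟦(1 : ℤ)⟧),
      (Triangle.mk f g h ∈ distTriang D) ∧ A.P Y ∧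
        (∀ A' : D, A.P A' → ∀ i : ℤ, Subsingleton (A' ⟶ Z⟦i⟧)) := by
  obtain ⟨R, ⟨adj⟩⟩ := hadm.exists_rightAdjoint
  intro X
  obtain ⟨Z, g, h, hT⟩ := distinguished_cocone_triangle (adj.counit.app X)
  have hZ : ObjectProperty.rightOrthogonal A.P Z :=
    rightOrthogonal_obj₃_of_bijective_comp_mor₁ A.P _ hT
      fun B hB ↦ adj.bijective_comp_counit_app ⟨B, hB⟩ X
  refine ⟨_, Z, _, g, h, hT, (R.obj X).property, fun A' hA' i ↦ ⟨fun φ ψ ↦ ?_⟩⟩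
  have hZi : ObjectProperty.rightOrthogonal A.P (Z⟦i⟧) :=
    (ObjectProperty.rightOrthogonal A.P).le_shift i Z hZ
  rw [hZi φ hA', hZi ψ hA']
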